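/- Consider the single-node binary model over horizon n. For every slot k with 1 ≤ k ≤ n−1 and every carryover m with n−k+1 ≤ m ≤ B, the optimal value function satisfies V_k(m) = E[log(1+h_k)] + V_{k+1}(n−k); in particular, when the available energy exceeds the number of remaining slots, it is optimal to transmit in slot k. -/

import Mathlib

/-!
When the carryover covers every remaining slot, the battery can never run empty: each slot adds
at most one unit of spending and the cap `B` is at least the number of remaining slots, so the
policy "always transmit" is admissible. Since `log (1 + F h) ≤ log (1 + h)` for `F ∈ {0, 1}`, this
policy is optimal, hence `V_s(m) = (n + 1 - s) · E[log (1 + h)]` for all such `s, m`. After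
transmitting in slot `k` the carryover `min (m + E_k) B - 1` is still abundant for slot `k + 1`,
so both identities reduce to `n + 1 - k = 1 + (n - k)`.
-/

open MeasureTheory ProbabilityTheory

namespace EHBinary

variable {Ω : Type*} [MeasurableSpace Ω]

/-- Carryover energy of a continuation problem started at slot `k` with
carryover `c_{k-1} = m`: `ccarry … j = c_j`, with `c_j = m` for `j < k` and
`c_j = min (c_{j-1} + E_j) B - F_j` for `j ≥ k`. -/
def ccarry (B : ℕ) (Earr F : ℕ → Ω → ℕ) (k m : ℕ) : ℕ → Ω → ℕ
  | 0 => fun _ => m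
  | j + 1 => fun ω =>
      if j + 1 < k then m
      else min (ccarry B Earr F k m j ω + Earr (j + 1) ω) B - F (j + 1) ω

/-- Available energy `U_j = min (c_{j-1} + E_j) B` in the continuation problem. -/
def cavail (B : ℕ) (Earr F : ℕ → Ω → ℕ) (k m j : ℕ) (ω : Ω) : ℕ :=
  min (ccarry B Earr F k m (j - 1) ω + Earr j ω) B

/-- The σ-algebra generated by `(E_k, …, E_j, h_k, …, h_j)`. -/
def histFrom (Earr : ℕ → Ω → ℕ) (h : ℕ → Ω → ℝ) (k j : ℕ) : MeasurableSpace Ω :=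
  MeasurableSpace.comap
    (fun ω => ((fun i : Fin (j + 1 - k) => Earr (k + i.1) ω),
               (fun i : Fin (j + 1 - k) => h (k + i.1) ω)))
    inferInstance

/-- Admissible binary continuation policy from slot `k` with carryover `m`:
for `k ≤ j ≤ n`, `F_j ∈ {0,1}`, `F_j ≤ U_j`, and `F_j` is a measurable
function of `(E_k, …, E_j, h_k, …, h_j)`. -/
def IsContPolicy (n B : ℕ) (Earr : ℕ → Ω → ℕ) (h : ℕ → Ω → ℝ) (k m : ℕ)
    (F : ℕ → Ω → ℕ) : Prop :=
  (∀ j, k ≤ j → j ≤ n → ∀ ω, F j ω ≤ 1) ∧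
  (∀ j, k ≤ j → j ≤ n → ∀ ω, F j ω ≤ cavail B Earr F k m j ω) ∧
  (∀ j, k ≤ j → j ≤ n → Measurable[histFrom Earr h k j] (F j))

/-- The optimal value function `V_k(m)`: the supremum, over admissible
continuation policies from slot `k` with carryover `c_{k-1} = m`, of the
expected continuation payoff `E [∑_{j=k}^n log (1 + F_j h_j)]`. -/
noncomputable def V (μ : Measure Ω) (n B : ℕ) (Earr : ℕ → Ω → ℕ) (h : ℕ → Ω → ℝ)
    (k m : ℕ) : ℝ :=
  sSup {y : ℝ | ∃ F : ℕ → Ω → ℕ, IsContPolicy n B Earr h k m F ∧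
    y = ∫ ω, ∑ j ∈ Finset.Icc k n, Real.log (1 + (F j ω : ℝ) * h j ω) ∂μ}

end EHBinary

namespace EHBinary

variable {Ω : Type*}

/-- Both `m` and the cap `B` cover the `n + 1 - s` remaining slots and each slot spends at most
one unit, so `c_j` never drops below the number `n - j` of slots still to come. -/
lemma le_ccarry_add_max (n B : ℕ) (Earr F : ℕ → Ω → ℕ) (s m : ℕ) (ω : Ω)
    (hs : 1 ≤ s) (hm : n + 1 ≤ m + s) (hB : n + 1 ≤ B + s)
    (hF : ∀ j, s ≤ j → j ≤ n → F j ω ≤ 1) :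
    ∀ j, j ≤ n → n ≤ ccarry B Earr F s m j ω + max j (s - 1) := by
  intro j
  induction j with
  | zero =>
    intro _
    simp only [ccarry]
    omega
  | succ j ih =>
    intro hjn
    by_cases hlt : j + 1 < s
    · simp only [ccarry, if_pos hlt]
      omega
    · have hcarry := ih (by omega)
      have hFj := hF (j + 1) (by omega) hjn
      simp only [ccarry, if_neg hlt]
      omega

lemma one_le_cavail (n B : ℕ) (Earr F : ℕ → Ω → ℕ) (s m : ℕ) (ω : Ω)
    (hs : 1 ≤ s) (hm : n + 1 ≤ m + s) (hB : n + 1 ≤ B + s)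
    (hF : ∀ j, s ≤ j → j ≤ n → F j ω ≤ 1)
    (j : ℕ) (hsj : s ≤ j) (hjn : j ≤ n) :
    1 ≤ cavail B Earr F s m j ω := by
  have hcarry := le_ccarry_add_max n B Earr F s m ω hs hm hB hF (j - 1) (by omega)
  unfold cavail
  omega

lemma isContPolicy_const_one (n B : ℕ) (Earr : ℕ → Ω → ℕ) (h : ℕ → Ω → ℝ) (s m : ℕ)
    (hs : 1 ≤ s) (hm : n + 1 ≤ m + s) (hB : n + 1 ≤ B + s) :
    IsContPolicy n B Earr h s m (fun _ _ => 1) :=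
  ⟨fun _ _ _ _ => le_rfl,
    fun j hsj hjn ω => one_le_cavail n B Earr _ s m ω hs hm hB (fun _ _ _ => le_rfl) j hsj hjn,
    fun _ _ _ => measurable_const⟩

variable [MeasurableSpace Ω]

lemma log_one_add_mul_le_log_one_add {f x : ℝ} (hf0 : 0 ≤ f) (hf1 : f ≤ 1) (hx : 0 ≤ x) :
    Real.log (1 + f * x) ≤ Real.log (1 + x) :=
  Real.log_le_log (by positivity) (by nlinarith)

lemma integral_sum_log_one_add_mul_le {ι : Type*} (μ : Measure Ω) (t : Finset ι)
    (f x : ι → Ω → ℝ) (hf0 : ∀ i ω, 0 ≤ f i ω) (hf1 : ∀ i ∈ t, ∀ ω, f i ω ≤ 1)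
    (hx : ∀ i ω, 0 ≤ x i ω) (hint : ∀ i ∈ t, Integrable (fun ω => Real.log (1 + x i ω)) μ) :
    ∫ ω, ∑ i ∈ t, Real.log (1 + f i ω * x i ω) ∂μ
      ≤ ∫ ω, ∑ i ∈ t, Real.log (1 + x i ω) ∂μ := by
  refine integral_mono_of_nonneg (Filter.Eventually.of_forall fun ω => ?_)
    (integrable_finsetSum t hint) (Filter.Eventually.of_forall fun ω => ?_)
  · exact Finset.sum_nonneg fun i _ =>
      Real.log_nonneg (by simpa using mul_nonneg (hf0 i ω) (hx i ω))
  · exact Finset.sum_le_sum fun i hi =>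
      log_one_add_mul_le_log_one_add (hf0 i ω) (hf1 i hi ω) (hx i ω)

lemma V_eq_integral_sum_log_one_add (μ : Measure Ω) (n B : ℕ) (Earr : ℕ → Ω → ℕ)
    (h : ℕ → Ω → ℝ) (hpos : ∀ j ω, 0 ≤ h j ω) (s m : ℕ)
    (hint : ∀ j, s ≤ j → j ≤ n → Integrable (fun ω => Real.log (1 + h j ω)) μ)
    (hs : 1 ≤ s) (hm : n + 1 ≤ m + s) (hB : n + 1 ≤ B + s) :
    V μ n B Earr h s m = ∫ ω, ∑ j ∈ Finset.Icc s n, Real.log (1 + h j ω) ∂μ := by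
  refine IsGreatest.csSup_eq ⟨⟨_, isContPolicy_const_one n B Earr h s m hs hm hB, ?_⟩, ?_⟩
  · simp only [Nat.cast_one, one_mul]
  · rintro y ⟨F, ⟨hF1, -, -⟩, rfl⟩
    refine integral_sum_log_one_add_mul_le μ _ (fun j ω => (F j ω : ℝ)) h
      (fun _ _ => Nat.cast_nonneg _) (fun j hj ω => ?_) hpos (fun j hj => ?_)
    all_goals obtain ⟨hsj, hjn⟩ := Finset.mem_Icc.mp hj
    · exact_mod_cast hF1 j hsj hjn ω
    · exact hint j hsj hjn

variable {μ : Measure Ω} {φ : Measure ℝ} {X : Ω → ℝ}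

lemma integrable_log_one_add_comp (hX : Measurable X) (hlaw : μ.map X = φ)
    (hint : Integrable (fun x => Real.log (1 + x)) φ) :
    Integrable (fun ω => Real.log (1 + X ω)) μ :=
  (hlaw ▸ hint).comp_measurable hX

lemma integral_log_one_add_comp (hX : Measurable X) (hlaw : μ.map X = φ) :
    ∫ ω, Real.log (1 + X ω) ∂μ = ∫ x, Real.log (1 + x) ∂φ := by
  have hg : Measurable fun x : ℝ => Real.log (1 + x) := by fun_prop
  rw [← hlaw, integral_map hX.aemeasurable hg.aestronglyMeasurable]

lemma V_eq_mul_integral (μ : Measure Ω) (n B : ℕ) (Earr : ℕ → Ω → ℕ) (h : ℕ → Ω → ℝ)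
    (φ : Measure ℝ) (hhm : ∀ j, Measurable (h j))
    (hlaw : ∀ j, 1 ≤ j → j ≤ n → Measure.map (h j) μ = φ) (hpos : ∀ j ω, 0 ≤ h j ω)
    (hint : Integrable (fun x => Real.log (1 + x)) φ)
    (s m : ℕ) (hs : 1 ≤ s) (hm : n + 1 ≤ m + s) (hB : n + 1 ≤ B + s) :
    V μ n B Earr h s m = (n + 1 - s : ℕ) * ∫ x, Real.log (1 + x) ∂φ := by
  have hint_j : ∀ j, s ≤ j → j ≤ n → Integrable (fun ω => Real.log (1 + h j ω)) μ :=
    fun j hsj hjn => integrable_log_one_add_comp (hhm j) (hlaw j (hs.trans hsj) hjn) hint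
  have hexp_j : ∀ j ∈ Finset.Icc s n, ∫ ω, Real.log (1 + h j ω) ∂μ = ∫ x, Real.log (1 + x) ∂φ :=
    fun j hj => integral_log_one_add_comp (hhm j)
      (hlaw j (hs.trans (Finset.mem_Icc.mp hj).1) (Finset.mem_Icc.mp hj).2)
  rw [V_eq_integral_sum_log_one_add μ n B Earr h hpos s m hint_j hs hm hB,
    integral_finsetSum _ fun j hj => hint_j j (Finset.mem_Icc.mp hj).1 (Finset.mem_Icc.mp hj).2,
    Finset.sum_congr rfl hexp_j, Finset.sum_const, Nat.card_Icc, nsmul_eq_mul]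

theorem value_when_energy_abundant_general
    (μ : Measure Ω) [IsProbabilityMeasure μ]
    (n B : ℕ)
    (φ : Measure ℝ)
    (h : ℕ → Ω → ℝ) (Earr : ℕ → Ω → ℕ)
    (hhm : ∀ k, Measurable (h k))
    (hlaw : ∀ k, 1 ≤ k → k ≤ n → Measure.map (h k) μ = φ)
    (hpos : ∀ k ω, 0 ≤ h k ω)
    (hint : Integrable (fun x => Real.log (1 + x)) φ)
    (k m : ℕ) (hk1 : 1 ≤ k) (hk : k ≤ n - 1) (hm1 : n - k + 1 ≤ m) (hm : m ≤ B) :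
    V μ n B Earr h k m = (∫ x, Real.log (1 + x) ∂φ) + V μ n B Earr h (k + 1) (n - k) ∧
    V μ n B Earr h k m
      = ∫ ω, (Real.log (1 + h k ω)
          + V μ n B Earr h (k + 1) (min (m + Earr k ω) B - 1)) ∂μ := by
  set C := ∫ x, Real.log (1 + x) ∂φ
  have hV : ∀ s m', 1 ≤ s → n + 1 ≤ m' + s → n + 1 ≤ B + s →
      V μ n B Earr h s m' = (n + 1 - s : ℕ) * C :=
    V_eq_mul_integral μ n B Earr h φ hhm hlaw hpos hint
  have hVk : V μ n B Earr h k m = C + (n - k : ℕ) * C := by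
    rw [hV k m hk1 (by omega) (by omega), show n + 1 - k = n - k + 1 by omega]
    push_cast
    ring
  have hVnext : ∀ m', n - k ≤ m' → V μ n B Earr h (k + 1) m' = (n - k : ℕ) * C :=
    fun m' hm' => by rw [hV (k + 1) m' (by omega) (by omega) (by omega), Nat.add_sub_add_right]
  have hintegrand : ∀ ω, Real.log (1 + h k ω) + V μ n B Earr h (k + 1) (min (m + Earr k ω) B - 1)
      = Real.log (1 + h k ω) + (n - k : ℕ) * C :=
    fun ω => by rw [hVnext _ (by omega)]
  have hlaw_k := hlaw k hk1 (by omega)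
  refine ⟨by rw [hVk, hVnext (n - k) le_rfl], ?_⟩
  rw [integral_congr_ae (Filter.Eventually.of_forall hintegrand),
    integral_add (integrable_log_one_add_comp (hhm k) hlaw_k hint) (integrable_const _),
    integral_log_one_add_comp (hhm k) hlaw_k, integral_const, probReal_univ, one_smul, hVk]

/-- For `1 ≤ k ≤ n - 1` and `n - k + 1 ≤ m ≤ B` (available energy exceeds the
number of remaining slots), `V_k(m) = E[log (1 + h_k)] + V_{k+1}(n - k)`; in
particular it is optimal to transmit in slot `k` (transmitting now and
continuing optimally attains `V_k(m)`). -/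
theorem value_when_energy_abundant
    (μ : Measure Ω) [IsProbabilityMeasure μ]
    (n B : ℕ) (hn : 1 ≤ n) (hB : 1 ≤ B)
    (p : ℝ) (hp0 : 0 ≤ p) (hp1 : p ≤ 1)
    (φ : Measure ℝ) [IsProbabilityMeasure φ]
    (h : ℕ → Ω → ℝ) (Earr : ℕ → Ω → ℕ)
    (hhm : ∀ k, Measurable (h k)) (hEm : ∀ k, Measurable (Earr k))
    (hlaw : ∀ k, 1 ≤ k → k ≤ n → Measure.map (h k) μ = φ)
    (hpos : ∀ k ω, 0 ≤ h k ω)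
    (hint : Integrable (fun x => Real.log (1 + x)) φ)
    (hE01 : ∀ k ω, Earr k ω ≤ 1)
    (hEp : ∀ k, 1 ≤ k → k ≤ n → μ {ω | Earr k ω = 1} = ENNReal.ofReal p)
    (hindep : iIndepFun
      (fun (k : Fin n) ω => (Earr (k.1 + 1) ω, h (k.1 + 1) ω)) μ)
    (hpair : ∀ k, 1 ≤ k → k ≤ n → IndepFun (Earr k) (h k) μ)
    (k m : ℕ) (hk1 : 1 ≤ k) (hk : k ≤ n - 1) (hm1 : n - k + 1 ≤ m) (hm : m ≤ B) :
    V μ n B Earr h k m = (∫ x, Real.log (1 + x) ∂φ) + V μ n B Earr h (k + 1) (n - k) ∧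
    V μ n B Earr h k m
      = ∫ ω, (Real.log (1 + h k ω)
          + V μ n B Earr h (k + 1) (min (m + Earr k ω) B - 1)) ∂μ :=
  value_when_energy_abundant_general μ n B φ h Earr hhm hlaw hpos hint k m hk1 hk hm1 hm

end EHBinary
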